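/- The set of 3-forms of G̃₂-type on ℝ⁷, i.e., the orbit {ω³ ∘ (g × g × g) : g ∈ GL(7,ℝ)} of the 3-form ω³ under the pullback action of GL(7,ℝ), is an open subset of the (finite-dimensional, normed) real vector space of alternating 3-forms on ℝ⁷. -/

import Mathlib

open Matrix

noncomputable def p (i : Fin 7) : (Fin 7 → ℝ) →ₗ[ℝ] ℝ := LinearMap.proj i

noncomputable def w3 (f g h : (Fin 7 → ℝ) →ₗ[ℝ] ℝ) : (Fin 7 → ℝ) [⋀^Fin 3]→ₗ[ℝ] ℝ :=
  (Matrix.detRowAlternating (n := Fin 3) (R := ℝ)).compLinearMap (LinearMap.pi ![f, g, h])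

noncomputable def ω3 : (Fin 7 → ℝ) [⋀^Fin 3]→ₗ[ℝ] ℝ :=
  w3 (p 0) (p 1) (p 2)
    + (w3 (p 3) (p 4) (p 0) + w3 (p 5) (p 6) (p 0))
    + (w3 (p 3) (p 5) (p 1) - w3 (p 4) (p 6) (p 1))
    + (w3 (p 3) (p 6) (p 2) + w3 (p 4) (p 5) (p 2))

theorem w3_continuous (f g h : (Fin 7 → ℝ) →ₗ[ℝ] ℝ) :
    Continuous fun v : Fin 3 → (Fin 7 → ℝ) => w3 f g h v := by
  have he : (fun v : Fin 3 → (Fin 7 → ℝ) => w3 f g h v)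
      = fun v => Matrix.det (Matrix.of fun i => LinearMap.pi ![f, g, h] (v i)) := rfl
  rw [he]
  exact Continuous.matrix_det <| continuous_matrix fun i j =>
    (![f, g, h] j).continuous_of_finiteDimensional.comp (continuous_apply i)

theorem ω3_continuous : Continuous fun v : Fin 3 → (Fin 7 → ℝ) => ω3 v := by
  have he : (fun v : Fin 3 → (Fin 7 → ℝ) => ω3 v)
      = fun v => w3 (p 0) (p 1) (p 2) v
          + (w3 (p 3) (p 4) (p 0) v + w3 (p 5) (p 6) (p 0) v)
          + (w3 (p 3) (p 5) (p 1) v - w3 (p 4) (p 6) (p 1) v)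
          + (w3 (p 3) (p 6) (p 2) v + w3 (p 4) (p 5) (p 2) v) := rfl
  rw [he]
  exact ((((w3_continuous _ _ _).add
    ((w3_continuous _ _ _).add (w3_continuous _ _ _))).add
    ((w3_continuous _ _ _).sub (w3_continuous _ _ _))).add
    ((w3_continuous _ _ _).add (w3_continuous _ _ _)))

/-- ω³ as a continuous alternating 3-form on ℝ⁷. -/
noncomputable def ω3C : (Fin 7 → ℝ) [⋀^Fin 3]→L[ℝ] ℝ :=
  { toMultilinearMap := ω3.toMultilinearMap
    cont := ω3_continuous
    map_eq_zero_of_eq' := fun v i j hv hij => ω3.map_eq_zero_of_eq v hv hij }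

/-
The orbit map `g ↦ g^* ω³` has surjective differential at the identity: the infinitesimal action
`X ↦ X · ω³` of `𝔤𝔩(7)` is onto the 35-dimensional space of 3-forms, as explicit integer
preimages of the basis 3-forms show (checked by computation over `ℤ`). By the surjective version
of the inverse function theorem the orbit is then a neighbourhood of `ω³`, and translating by
`GL(7, ℝ)` it is a neighbourhood of each of its points. A 3-form is handled through its values
on the 35 increasing triples of standard basis vectors, which determine it.
-/

open Topology Filter

section Pullback

variable {𝕜 : Type*} [NontriviallyNormedField 𝕜] [CompleteSpace 𝕜] {n : ℕ} {ι : Type*}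

noncomputable def formPullback (A : Matrix (Fin n) (Fin n) 𝕜)
    (φ : (Fin n → 𝕜) [⋀^ι]→L[𝕜] 𝕜) : (Fin n → 𝕜) [⋀^ι]→L[𝕜] 𝕜 :=
  φ.compContinuousLinearMap (LinearMap.toContinuousLinearMap (mulVecLin A))

theorem continuous_formPullback (A : Matrix (Fin n) (Fin n) 𝕜) :
    Continuous (formPullback (ι := ι) A) :=
  (ContinuousAlternatingMap.compContinuousLinearMapCLM _).continuous

@[simp]
theorem formPullback_apply (A : Matrix (Fin n) (Fin n) 𝕜) (φ : (Fin n → 𝕜) [⋀^ι]→L[𝕜] 𝕜)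
    (v : ι → Fin n → 𝕜) : formPullback A φ v = φ fun i => A *ᵥ v i := rfl

theorem formPullback_mul (A B : Matrix (Fin n) (Fin n) 𝕜) (φ : (Fin n → 𝕜) [⋀^ι]→L[𝕜] 𝕜) :
    formPullback (B * A) φ = formPullback A (formPullback B φ) := by
  ext v
  simp [mulVec_mulVec]

theorem formPullback_one (φ : (Fin n → 𝕜) [⋀^ι]→L[𝕜] 𝕜) : formPullback 1 φ = φ := by
  ext v
  simp

def formOrbit (ω : (Fin n → 𝕜) [⋀^ι]→L[𝕜] 𝕜) : Set ((Fin n → 𝕜) [⋀^ι]→L[𝕜] 𝕜) :=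
  {φ | ∃ g : GL (Fin n) 𝕜, φ = formPullback (g : Matrix (Fin n) (Fin n) 𝕜) ω}

theorem isOpen_formOrbit_of_mem_nhds {ω : (Fin n → 𝕜) [⋀^ι]→L[𝕜] 𝕜}
    (h : formOrbit ω ∈ 𝓝 ω) : IsOpen (formOrbit ω) := by
  rw [isOpen_iff_mem_nhds]
  rintro _ ⟨g, rfl⟩
  have hback : formPullback (g⁻¹ : GL (Fin n) 𝕜) (formPullback g ω) = ω := by
    rw [← formPullback_mul, ← Units.val_mul, mul_inv_cancel, Units.val_one, formPullback_one]
  have hnhds : formPullback (g⁻¹ : GL (Fin n) 𝕜) ⁻¹' formOrbit ω ∈ 𝓝 (formPullback g ω) :=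
    (continuous_formPullback _).continuousAt.preimage_mem_nhds (by rwa [hback])
  refine mem_of_superset hnhds ?_
  rintro ψ ⟨k, hψ⟩
  refine ⟨k * g, ?_⟩
  calc ψ = formPullback g (formPullback (g⁻¹ : GL (Fin n) 𝕜) ψ) := by
        rw [← formPullback_mul, ← Units.val_mul, inv_mul_cancel, Units.val_one, formPullback_one]
    _ = formPullback (k * g : GL (Fin n) 𝕜) ω := by rw [hψ, ← formPullback_mul, Units.val_mul]

end Pullback

theorem Module.Basis.ext_alternating_of_strictMono {R M N ι : Type*} [CommRing R]
    [AddCommGroup M] [Module R M] [AddCommGroup N] [Module R N] [LinearOrder ι] {k : ℕ}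
    {f g : M [⋀^Fin k]→ₗ[R] N} (b : Basis ι R M)
    (h : ∀ t : Fin k → ι, StrictMono t → (f fun i => b (t i)) = g fun i => b (t i)) :
    f = g := by
  refine b.ext_alternating fun v hv => ?_
  set σ := Tuple.sort v
  have hsorted : StrictMono (v ∘ σ) :=
    (Tuple.monotone_sort v).strictMono_of_injective (hv.comp σ.injective)
  have hv : (fun i => b (v i)) = (fun i => b ((v ∘ σ) i)) ∘ σ.symm := by
    ext i
    simp
  rw [hv, f.map_perm, g.map_perm, h _ hsorted]

/-- `ω3` in coordinates, over any commutative ring, so that it can be evaluated over `ℤ`. -/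
def ω3Poly {R : Type*} [CommRing R] (v : Fin 3 → Fin 7 → R) : R :=
  let m : Fin 7 → Fin 7 → Fin 7 → R := fun a b c =>
    v 0 a * (v 1 b * v 2 c - v 1 c * v 2 b) - v 0 b * (v 1 a * v 2 c - v 1 c * v 2 a)
      + v 0 c * (v 1 a * v 2 b - v 1 b * v 2 a)
  m 0 1 2 + (m 3 4 0 + m 5 6 0) + (m 3 5 1 - m 4 6 1) + (m 3 6 2 + m 4 5 2)

theorem map_ω3Poly {R S : Type*} [CommRing R] [CommRing S] (f : R →+* S)
    (v : Fin 3 → Fin 7 → R) : f (ω3Poly v) = ω3Poly fun r a => f (v r a) := by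
  simp only [ω3Poly, map_add, map_sub, map_mul]

theorem ω3_eq_ω3Poly (v : Fin 3 → Fin 7 → ℝ) : ω3 v = ω3Poly v := by
  have hdet (M : Fin 3 → Fin 3 → ℝ) : detRowAlternating M = (Matrix.of M).det := rfl
  simp only [ω3, w3, p, AlternatingMap.add_apply, AlternatingMap.sub_apply,
    AlternatingMap.compLinearMap_apply, hdet, det_fin_three]
  simp only [ω3Poly, of_apply, Matrix.cons_val, LinearMap.pi_apply, LinearMap.proj_apply]
  ring

/-- `(X · ω³)(e_{t 0}, e_{t 1}, e_{t 2})`, where `X ∈ 𝔤𝔩(7)` acts on forms as a derivation. -/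
def derivω3Poly {R : Type*} [CommRing R] (X : Matrix (Fin 7) (Fin 7) R) (t : Fin 3 → Fin 7) :
    R :=
  ∑ r, ω3Poly (Function.update (fun j => Pi.single (t j) 1) r (X.col (t r)))

theorem map_derivω3Poly {R S : Type*} [CommRing R] [CommRing S] (f : R →+* S)
    (X : Matrix (Fin 7) (Fin 7) R) (t : Fin 3 → Fin 7) :
    f (derivω3Poly X t) = derivω3Poly (X.map f) t := by
  simp only [derivω3Poly, map_sum, map_ω3Poly]
  refine Finset.sum_congr rfl fun r _ => congrArg ω3Poly ?_
  ext i a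
  rcases eq_or_ne i r with rfl | hi <;> simp [Function.update_of_ne, Pi.single_apply, *]

def basisTriple : Fin 35 → Fin 3 → Fin 7 :=
  ![![0, 1, 2], ![0, 1, 3], ![0, 1, 4], ![0, 1, 5], ![0, 1, 6], ![0, 2, 3], ![0, 2, 4],
    ![0, 2, 5], ![0, 2, 6], ![0, 3, 4], ![0, 3, 5], ![0, 3, 6], ![0, 4, 5], ![0, 4, 6],
    ![0, 5, 6], ![1, 2, 3], ![1, 2, 4], ![1, 2, 5], ![1, 2, 6], ![1, 3, 4], ![1, 3, 5],
    ![1, 3, 6], ![1, 4, 5], ![1, 4, 6], ![1, 5, 6], ![2, 3, 4], ![2, 3, 5], ![2, 3, 6],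
    ![2, 4, 5], ![2, 4, 6], ![2, 5, 6], ![3, 4, 5], ![3, 4, 6], ![3, 5, 6], ![4, 5, 6]]

theorem exists_basisTriple_eq :
    ∀ t : Fin 3 → Fin 7, t 0 < t 1 → t 1 < t 2 → ∃ u, basisTriple u = t := by
  decide +kernel

def matrixOfEntries {n : ℕ} (l : List (Fin n × Fin n × ℤ)) : Matrix (Fin n) (Fin n) ℤ :=
  (l.map fun e => Matrix.single e.1 e.2.1 e.2.2).sum

/-- For the seven terms `±e^L` of `ω³` (the lines `L` of the Fano plane, any two of which meet
in one point) the entry is the diagonal matrix `±(3 • 1_L - 1)`. -/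
def certificate : Fin 35 → Matrix (Fin 7) (Fin 7) ℤ := fun s => matrixOfEntries <| ![
  [(0, 0, 2), (1, 1, 2), (2, 2, 2), (3, 3, -1), (4, 4, -1), (5, 5, -1), (6, 6, -1)],
  [(0, 5, -3), (1, 4, 3), (2, 3, 6), (3, 2, 3)],
  [(0, 6, 3), (2, 4, 3), (3, 1, 3)],
  [(1, 6, 3), (2, 5, 3), (3, 0, -3)],
  [(1, 5, -3), (2, 6, 3), (4, 0, 3)],
  [(0, 6, -3), (1, 3, -6), (2, 4, 3), (3, 1, -3)],
  [(0, 5, -3), (1, 4, -3), (3, 2, 3)],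
  [(1, 5, -3), (2, 6, 3), (4, 0, -3)],
  [(1, 6, -3), (2, 5, -3), (3, 0, -3)],
  [(0, 0, 2), (1, 1, -1), (2, 2, -1), (3, 3, 2), (4, 4, 2), (5, 5, -1), (6, 6, -1)],
  [(1, 0, 3), (3, 6, -3), (4, 5, 3)],
  [(2, 0, 3), (3, 5, 3), (4, 6, 3)],
  [(2, 0, 3), (3, 5, -3), (4, 6, -3)],
  [(1, 0, -3), (3, 6, -3), (4, 5, 3)],
  [(0, 0, 2), (1, 1, -1), (2, 2, -1), (3, 3, -1), (4, 4, -1), (5, 5, 2), (6, 6, 2)],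
  [(0, 3, 6), (1, 6, -3), (2, 5, 3), (3, 0, 3)],
  [(0, 4, 6), (1, 5, -3), (2, 6, -3), (4, 0, 3)],
  [(0, 5, 3), (1, 4, 3), (3, 2, 3)],
  [(0, 6, 3), (2, 4, 3), (3, 1, -3)],
  [(0, 1, 6), (1, 0, -3), (3, 6, 3), (4, 5, 3)],
  [(0, 0, -1), (1, 1, 2), (2, 2, -1), (3, 3, 2), (4, 4, -1), (5, 5, 2), (6, 6, -1)],
  [(2, 1, 3), (3, 4, -3), (5, 6, 3)],
  [(2, 1, 3), (3, 4, 3), (5, 6, -3)],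
  [(0, 0, 1), (1, 1, -2), (2, 2, 1), (3, 3, 1), (4, 4, -2), (5, 5, 1), (6, 6, -2)],
  [(1, 0, 3), (3, 6, -3), (4, 5, -3)],
  [(0, 2, 6), (2, 0, -3), (3, 5, -3), (4, 6, 3)],
  [(1, 2, 6), (2, 1, -3), (3, 4, 3), (5, 6, 3)],
  [(0, 0, -1), (1, 1, -1), (2, 2, 2), (3, 3, 2), (4, 4, -1), (5, 5, -1), (6, 6, 2)],
  [(0, 0, -1), (1, 1, -1), (2, 2, 2), (3, 3, -1), (4, 4, 2), (5, 5, 2), (6, 6, -1)],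
  [(2, 1, -3), (3, 4, 3), (5, 6, 3)],
  [(2, 0, 3), (3, 5, 3), (4, 6, -3)],
  [(0, 5, 3), (1, 4, -3), (3, 2, -3)],
  [(0, 6, 3), (2, 4, -3), (3, 1, 3)],
  [(1, 6, 3), (2, 5, -3), (3, 0, -3)],
  [(1, 5, 3), (2, 6, 3), (4, 0, -3)]] s

theorem certificate_spec :
    ∀ s u, derivω3Poly (certificate s) (basisTriple u) = if u = s then 6 else 0 := by
  decide +kernel

abbrev Form3 : Type := (Fin 7 → ℝ) [⋀^Fin 3]→L[ℝ] ℝ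

noncomputable def formCoords : Form3 →L[ℝ] Fin 35 → ℝ :=
  ContinuousLinearMap.pi fun u =>
    ContinuousAlternatingMap.apply ℝ (Fin 7 → ℝ) ℝ fun r => Pi.single (basisTriple u r) 1

theorem formCoords_apply (φ : Form3) (u : Fin 35) :
    formCoords φ u = φ fun r => Pi.single (basisTriple u r) 1 := rfl

theorem formCoords_injective : Function.Injective formCoords := by
  intro φ ψ h
  apply ContinuousAlternatingMap.toAlternatingMap_injective
  refine (Pi.basisFun ℝ (Fin 7)).ext_alternating_of_strictMono fun t ht => ?_
  obtain ⟨u, rfl⟩ := exists_basisTriple_eq t (ht (by decide)) (ht (by decide))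
  simpa [formCoords_apply] using congrFun h u

section OrbitMap

open scoped Matrix.Norms.Operator

noncomputable def mulVecLeftCLM {n : ℕ} (v : Fin n → ℝ) :
    Matrix (Fin n) (Fin n) ℝ →L[ℝ] Fin n → ℝ :=
  LinearMap.toContinuousLinearMap ((LinearMap.applyₗ v).comp Matrix.toLin'.toLinearMap)

theorem mulVecLeftCLM_apply {n : ℕ} (v : Fin n → ℝ) (A : Matrix (Fin n) (Fin n) ℝ) :
    mulVecLeftCLM v A = A *ᵥ v := by
  simp [mulVecLeftCLM]

theorem exists_hasStrictFDerivAt_formCoords_formPullback :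
    ∃ D : Matrix (Fin 7) (Fin 7) ℝ →L[ℝ] Fin 35 → ℝ,
      HasStrictFDerivAt (fun A => formCoords (formPullback A ω3C)) D 1 ∧
        ∀ X u, D X u = derivω3Poly X (basisTriple u) := by
  let f := ω3C.toContinuousMultilinearMap
  let cols (u : Fin 35) :=
    ContinuousLinearMap.pi fun r => mulVecLeftCLM (Pi.single (basisTriple u r) 1)
  refine ⟨ContinuousLinearMap.pi fun u =>
    (f.linearDeriv (cols u 1)).comp (cols u), hasStrictFDerivAt_pi.2 fun u => ?_, fun X u => ?_⟩
  · have : (fun A => formCoords (formPullback A ω3C) u) = fun A => f (cols u A) := by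
      ext A
      simp [formCoords_apply, cols, mulVecLeftCLM_apply, f]
    rw [this]
    exact (f.hasStrictFDerivAt (cols u 1)).comp 1 (cols u).hasStrictFDerivAt
  · have hω3 (v : Fin 3 → Fin 7 → ℝ) : f v = ω3Poly v := ω3_eq_ω3Poly v
    have hcol (j : Fin 7) : (1 : Matrix (Fin 7) (Fin 7) ℝ).col j = Pi.single j 1 := by
      ext a
      simp [Matrix.one_apply, Pi.single_apply]
    simp [cols, f.linearDeriv_apply, mulVecLeftCLM_apply, hω3, derivω3Poly, hcol]

theorem formOrbit_ω3C_mem_nhds : formOrbit ω3C ∈ 𝓝 ω3C := by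
  obtain ⟨D, hD, hD_apply⟩ := exists_hasStrictFDerivAt_formCoords_formPullback
  have hsingle (s : Fin 35) : Pi.single s 1 ∈ D.range := by
    refine ⟨(6 : ℝ)⁻¹ • (certificate s).map (Int.castRingHom ℝ), funext fun u => ?_⟩
    rw [ContinuousLinearMap.coe_coe, map_smul, Pi.smul_apply, hD_apply, ← map_derivω3Poly,
      certificate_spec]
    by_cases h : u = s <;> simp [h]
  have hsurj : D.range = ⊤ := by
    rw [eq_top_iff, ← (Pi.basisFun ℝ (Fin 35)).span_eq, Submodule.span_le]
    rintro _ ⟨s, rfl⟩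
    simpa using hsingle s
  have himage : formCoords '' formOrbit ω3C ∈ 𝓝 (formCoords ω3C) := by
    have hmap := hD.map_nhds_eq_of_surj hsurj
    rw [formPullback_one] at hmap
    rw [← hmap]
    refine mem_of_superset (image_mem_map (Units.isOpen.mem_nhds isUnit_one)) ?_
    rintro _ ⟨A, hA, rfl⟩
    exact ⟨_, ⟨hA.unit, rfl⟩, rfl⟩
  have hpre := formCoords.continuous.continuousAt.preimage_mem_nhds himage
  rwa [Set.preimage_image_eq _ formCoords_injective] at hpre

end OrbitMap

/-- The `GL(7,ℝ)`-orbit of ω³ under the pullback action, i.e. the set of 3-forms of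
`G̃₂`-type on ℝ⁷, is open in the space of alternating 3-forms on ℝ⁷. -/
theorem isOpen_orbit_ω3 :
    IsOpen {φ : (Fin 7 → ℝ) [⋀^Fin 3]→L[ℝ] ℝ | ∃ g : GL (Fin 7) ℝ,
      φ = ω3C.compContinuousLinearMap
        (LinearMap.toContinuousLinearMap
          (Matrix.mulVecLin (g : Matrix (Fin 7) (Fin 7) ℝ)))} :=
  isOpen_formOrbit_of_mem_nhds formOrbit_ω3C_mem_nhds
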